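/- Let $I=[t_0,t_0+r]$, $\eta>0$, $\varphi:I\to(0,\infty)$ nondecreasing continuous, and $f:I\times\mathbb{R}\to\mathbb{R}$ continuous with $|f(t,y_1)-f(t,y_2)|\le L|y_1-y_2|$ for all $t\in I$ and $y_1,y_2\in\mathbb{R}$. Define $\Theta:C(I,\mathbb{R})\to C(I,\mathbb{R})$ by $(\Theta g)(t)=\int_{t_0}^{t} f(s,g(s))\,ds$ and the generalized metric $d(g_1,g_2)=\inf\{C\in[0,\infty]: |g_1(t)-g_2(t)|e^{-\eta(t-t_0)}\le C\varphi(t) \text{ for all } t\in I\}$. Then $d(\Theta g_1,\Theta g_2)\le \frac{L}{\eta}\, d(g_1,g_2)$ for all $g_1,g_2\in C(I,\mathbb{R})$; in particular, $\Theta$ is strictly contractive whenever $\eta>L$. -/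

import Mathlib

/-!
If `|g₁ s - g₂ s| ≤ c φ(s) e^{η(s-t₀)}` on `I`, the Lipschitz bound and the monotonicity of `φ` give
`|Θ g₁ t - Θ g₂ t| ≤ L c ∫_{t₀}^t φ(s) e^{η(s-t₀)} ds ≤ (L/η) c φ(t) e^{η(t-t₀)}`: the exponential
weight absorbs the growth of the integral at the cost of the factor `1/η`. Taking the infimum over
admissible `c` gives the contraction estimate (trivially so when no finite `c` exists, since then
the right-hand side is `∞`).
-/

open Set Real MeasureTheory
open scoped ENNReal

section WeightedBound

variable {α : Type*}

/-- For `u t = |g₁ t - g₂ t| e^{-η (t - t₀)}` this is the generalized distance `d(g₁, g₂)`. -/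
noncomputable def weightedBound (I : Set α) (φ u : α → ℝ) : ℝ≥0∞ :=
  sInf {C : ℝ≥0∞ | ∀ t ∈ I, ENNReal.ofReal (u t) ≤ C * ENNReal.ofReal (φ t)}

variable {I : Set α} {φ u v : α → ℝ}

lemma ofReal_le_weightedBound_mul {t : α} (ht : t ∈ I) (hφt : 0 < φ t) :
    ENNReal.ofReal (u t) ≤ weightedBound I φ u * ENNReal.ofReal (φ t) := by
  have hφt' : ENNReal.ofReal (φ t) ≠ 0 := (ENNReal.ofReal_pos.2 hφt).ne'
  rw [← ENNReal.div_le_iff hφt' ENNReal.ofReal_ne_top]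
  exact le_sInf fun C hC => (ENNReal.div_le_iff hφt' ENNReal.ofReal_ne_top).2 (hC t ht)

lemma le_toReal_weightedBound_mul (hφ : ∀ t ∈ I, 0 < φ t) (hfin : weightedBound I φ u ≠ ⊤) :
    ∀ t ∈ I, u t ≤ (weightedBound I φ u).toReal * φ t := by
  intro t ht
  have h := ofReal_le_weightedBound_mul (u := u) ht (hφ t ht)
  rw [← ENNReal.ofReal_toReal hfin, ← ENNReal.ofReal_mul ENNReal.toReal_nonneg] at h
  exact (ENNReal.ofReal_le_ofReal_iff (mul_nonneg ENNReal.toReal_nonneg (hφ t ht).le)).1 h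

lemma weightedBound_le_ofReal {c : ℝ} (hc : 0 ≤ c) (h : ∀ t ∈ I, u t ≤ c * φ t) :
    weightedBound I φ u ≤ ENNReal.ofReal c :=
  sInf_le fun t ht => by
    rw [← ENNReal.ofReal_mul hc]
    exact ENNReal.ofReal_le_ofReal (h t ht)

lemma weightedBound_le_mul {k : ℝ} (hk : 0 < k) (hφ : ∀ t ∈ I, 0 < φ t)
    (h : ∀ c, 0 ≤ c → (∀ t ∈ I, v t ≤ c * φ t) → ∀ t ∈ I, u t ≤ k * c * φ t) :
    weightedBound I φ u ≤ ENNReal.ofReal k * weightedBound I φ v := by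
  rcases eq_or_ne (weightedBound I φ v) ⊤ with htop | hfin
  · rw [htop, ENNReal.mul_top (ENNReal.ofReal_pos.2 hk).ne']
    exact le_top
  · calc weightedBound I φ u ≤ ENNReal.ofReal (k * (weightedBound I φ v).toReal) :=
          weightedBound_le_ofReal (by positivity)
            (h _ ENNReal.toReal_nonneg (le_toReal_weightedBound_mul hφ hfin))
      _ = ENNReal.ofReal k * weightedBound I φ v := by
          rw [ENNReal.ofReal_mul hk.le, ENNReal.ofReal_toReal hfin]

end WeightedBound

lemma mul_exp_neg_le_iff {a b x : ℝ} : a * exp (-x) ≤ b ↔ a ≤ b * exp x := by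
  rw [exp_neg, ← div_eq_mul_inv, div_le_iff₀ (exp_pos x)]

lemma integral_exp_mul_sub {η : ℝ} (hη : η ≠ 0) (t₀ t : ℝ) :
    ∫ s in t₀..t, exp (η * (s - t₀)) = (exp (η * (t - t₀)) - 1) / η := by
  simp only [mul_sub, intervalIntegral.integral_comp_mul_sub (fun x => exp x) hη, sub_self,
    integral_exp, exp_zero, smul_eq_mul]
  ring

section ExpWeight

variable {φ : ℝ → ℝ} {t₀ t η : ℝ}

lemma intervalIntegrable_mul_exp_of_monotoneOn (ht : t₀ ≤ t) (hφ : MonotoneOn φ (Icc t₀ t)) :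
    IntervalIntegrable (fun s => φ s * exp (η * (s - t₀))) volume t₀ t :=
  (MonotoneOn.intervalIntegrable (u := φ) (by rwa [uIcc_of_le ht])).mul_continuousOn
    (by fun_prop)

lemma integral_mul_exp_le_of_monotoneOn (hη : 0 < η) (ht : t₀ ≤ t)
    (hφ : MonotoneOn φ (Icc t₀ t)) (hφt : 0 ≤ φ t) :
    ∫ s in t₀..t, φ s * exp (η * (s - t₀)) ≤ φ t / η * exp (η * (t - t₀)) :=
  calc ∫ s in t₀..t, φ s * exp (η * (s - t₀))
      ≤ ∫ s in t₀..t, φ t * exp (η * (s - t₀)) :=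
        intervalIntegral.integral_mono_on ht (intervalIntegrable_mul_exp_of_monotoneOn ht hφ)
          (intervalIntegrable_mul_exp_of_monotoneOn ht monotoneOn_const)
          fun s hs => mul_le_mul_of_nonneg_right (hφ hs ⟨ht, le_rfl⟩ hs.2) (exp_pos _).le
    _ = φ t / η * (exp (η * (t - t₀)) - 1) := by
        rw [intervalIntegral.integral_const_mul, integral_exp_mul_sub hη.ne']
        ring
    _ ≤ φ t / η * exp (η * (t - t₀)) :=
        mul_le_mul_of_nonneg_left (sub_le_self _ zero_le_one) (div_nonneg hφt hη.le)

lemma abs_integral_le_of_abs_le_mul_exp {F : ℝ → ℝ} {K : ℝ} (hη : 0 < η) (ht : t₀ ≤ t)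
    (hφ : MonotoneOn φ (Icc t₀ t)) (hφt : 0 ≤ φ t) (hK : 0 ≤ K)
    (hF : IntervalIntegrable F volume t₀ t)
    (hFle : ∀ s ∈ Icc t₀ t, |F s| ≤ K * (φ s * exp (η * (s - t₀)))) :
    |∫ s in t₀..t, F s| ≤ K * (φ t / η * exp (η * (t - t₀))) :=
  calc |∫ s in t₀..t, F s|
      ≤ ∫ s in t₀..t, |F s| := intervalIntegral.abs_integral_le_integral_abs ht
    _ ≤ ∫ s in t₀..t, K * (φ s * exp (η * (s - t₀))) :=
        intervalIntegral.integral_mono_on ht hF.abs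
          ((intervalIntegrable_mul_exp_of_monotoneOn ht hφ).const_mul K) hFle
    _ = K * ∫ s in t₀..t, φ s * exp (η * (s - t₀)) :=
        intervalIntegral.integral_const_mul _ _
    _ ≤ K * (φ t / η * exp (η * (t - t₀))) :=
        mul_le_mul_of_nonneg_left (integral_mul_exp_le_of_monotoneOn hη ht hφ hφt) hK

end ExpWeight

theorem volterra_operator_contraction_general
    (t₀ r L η : ℝ) (hL : 0 < L) (hη : 0 < η)
    (φ : ℝ → ℝ)
    (hφmono : MonotoneOn φ (Set.Icc t₀ (t₀ + r)))
    (hφpos : ∀ t ∈ Set.Icc t₀ (t₀ + r), 0 < φ t)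
    (f : ℝ → ℝ → ℝ)
    (hf : ContinuousOn (fun p : ℝ × ℝ => f p.1 p.2) (Set.Icc t₀ (t₀ + r) ×ˢ Set.univ))
    (hlip : ∀ t ∈ Set.Icc t₀ (t₀ + r), ∀ y₁ y₂ : ℝ,
      |f t y₁ - f t y₂| ≤ L * |y₁ - y₂|)
    (Θ : (ℝ → ℝ) → (ℝ → ℝ))
    (hΘ : ∀ g : ℝ → ℝ, ∀ t : ℝ, Θ g t = ∫ s in t₀..t, f s (g s))
    (d : (ℝ → ℝ) → (ℝ → ℝ) → ℝ≥0∞)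
    (hd : ∀ g₁ g₂ : ℝ → ℝ, d g₁ g₂ =
      sInf {C : ℝ≥0∞ | ∀ t ∈ Set.Icc t₀ (t₀ + r),
        ENNReal.ofReal (|g₁ t - g₂ t| * Real.exp (-(η * (t - t₀)))) ≤
          C * ENNReal.ofReal (φ t)}) :
    ∀ g₁ g₂ : ℝ → ℝ, ContinuousOn g₁ (Set.Icc t₀ (t₀ + r)) →
      ContinuousOn g₂ (Set.Icc t₀ (t₀ + r)) →
      d (Θ g₁) (Θ g₂) ≤ ENNReal.ofReal (L / η) * d g₁ g₂ := by
  intro g₁ g₂ hg₁ hg₂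
  have hcomp : ∀ g, ContinuousOn g (Icc t₀ (t₀ + r)) →
      ContinuousOn (fun s => f s (g s)) (Icc t₀ (t₀ + r)) :=
    fun g hg => hf.comp (continuousOn_id.prodMk hg) fun s hs => ⟨hs, trivial⟩
  rw [hd, hd]
  refine weightedBound_le_mul (div_pos hL hη) hφpos fun c hc hbound t ht => ?_
  have hsub : Icc t₀ t ⊆ Icc t₀ (t₀ + r) := Icc_subset_Icc_right ht.2
  have hint : ∀ g, ContinuousOn g (Icc t₀ (t₀ + r)) →
      IntervalIntegrable (fun s => f s (g s)) volume t₀ t :=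
    fun g hg => ((hcomp g hg).mono hsub).intervalIntegrable_of_Icc ht.1
  rw [mul_exp_neg_le_iff, hΘ, hΘ, ← intervalIntegral.integral_sub (hint g₁ hg₁) (hint g₂ hg₂)]
  calc |∫ s in t₀..t, (f s (g₁ s) - f s (g₂ s))|
      ≤ L * c * (φ t / η * exp (η * (t - t₀))) :=
        abs_integral_le_of_abs_le_mul_exp hη ht.1 (hφmono.mono hsub) (hφpos t ht).le
          (by positivity) ((hint g₁ hg₁).sub (hint g₂ hg₂)) fun s hs => ?_
    _ = L / η * c * φ t * exp (η * (t - t₀)) := by ring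
  calc |f s (g₁ s) - f s (g₂ s)| ≤ L * |g₁ s - g₂ s| := hlip s (hsub hs) _ _
    _ ≤ L * (c * φ s * exp (η * (s - t₀))) :=
        mul_le_mul_of_nonneg_left (mul_exp_neg_le_iff.1 (hbound s (hsub hs))) hL.le
    _ = L * c * (φ s * exp (η * (s - t₀))) := by ring

/-- The key contraction estimate: with the weighted generalized metric
`d(g₁,g₂) = inf{C : |g₁ t - g₂ t| e^{-η(t-t₀)} ≤ C φ t on I}`, the Volterra
operator `(Θ g)(t) = ∫_{t₀}^t f(s, g(s)) ds` satisfies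
`d(Θ g₁, Θ g₂) ≤ (L/η) d(g₁, g₂)` for continuous `g₁, g₂`. -/
theorem volterra_operator_contraction
    (t₀ r L η : ℝ) (hr : 0 < r) (hL : 0 < L) (hη : 0 < η)
    (φ : ℝ → ℝ) (hφc : ContinuousOn φ (Set.Icc t₀ (t₀ + r)))
    (hφmono : MonotoneOn φ (Set.Icc t₀ (t₀ + r)))
    (hφpos : ∀ t ∈ Set.Icc t₀ (t₀ + r), 0 < φ t)
    (f : ℝ → ℝ → ℝ)
    (hf : ContinuousOn (fun p : ℝ × ℝ => f p.1 p.2) (Set.Icc t₀ (t₀ + r) ×ˢ Set.univ))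
    (hlip : ∀ t ∈ Set.Icc t₀ (t₀ + r), ∀ y₁ y₂ : ℝ,
      |f t y₁ - f t y₂| ≤ L * |y₁ - y₂|)
    (Θ : (ℝ → ℝ) → (ℝ → ℝ))
    (hΘ : ∀ g : ℝ → ℝ, ∀ t : ℝ, Θ g t = ∫ s in t₀..t, f s (g s))
    (d : (ℝ → ℝ) → (ℝ → ℝ) → ℝ≥0∞)
    (hd : ∀ g₁ g₂ : ℝ → ℝ, d g₁ g₂ =
      sInf {C : ℝ≥0∞ | ∀ t ∈ Set.Icc t₀ (t₀ + r),
        ENNReal.ofReal (|g₁ t - g₂ t| * Real.exp (-(η * (t - t₀)))) ≤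
          C * ENNReal.ofReal (φ t)}) :
    ∀ g₁ g₂ : ℝ → ℝ, ContinuousOn g₁ (Set.Icc t₀ (t₀ + r)) →
      ContinuousOn g₂ (Set.Icc t₀ (t₀ + r)) →
      d (Θ g₁) (Θ g₂) ≤ ENNReal.ofReal (L / η) * d g₁ g₂ :=
  volterra_operator_contraction_general t₀ r L η hL hη φ hφmono hφpos f hf hlip Θ hΘ d hd
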